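/- Let g : (-1,1) → ℝ be defined by g(M) = (1/√(2π(1−M²)))·exp(−(erf⁻¹(M))²), where erf⁻¹ is the inverse of the Gauss error function. Then for every M ∈ (−1,1), g(M) ≤ g(0) = 1/√(2π). -/

import Mathlib

/-!
Write `I₊ = ∫_y^∞ e^{-t²}` and `I₋ = ∫_{-∞}^y e^{-t²}`, so that `I₊ = (√π/2)(1 - erf y)` and
`I₋ = (√π/2)(1 + erf y)`. Substituting `t = y ± s` and applying Cauchy–Schwarz on `(0, ∞)` to
`e^{-(s+y)²/2}` and `e^{-(s-y)²/2}`, whose product is `e^{-y²} e^{-s²}`, gives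
`(e^{-y²} √π/2)² ≤ I₊ I₋`, i.e. `e^{-2y²} ≤ 1 - erf(y)²`. Taking square roots, the Gaussian factor
`e^{-y²}` never exceeds `√(1 - M²)`.
-/

open MeasureTheory Set Real

noncomputable def erf (x : ℝ) : ℝ :=
  (2 / Real.sqrt Real.pi) * ∫ t in (0 : ℝ)..x, Real.exp (-t ^ 2)

theorem sq_integral_mul_le_integral_sq_mul_integral_sq {α : Type*} [MeasurableSpace α]
    {μ : Measure α} {f g : α → ℝ} (hf : 0 ≤ᵐ[μ] f) (hg : 0 ≤ᵐ[μ] g)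
    (hf₂ : MemLp f 2 μ) (hg₂ : MemLp g 2 μ) :
    (∫ a, f a * g a ∂μ) ^ 2 ≤ (∫ a, f a ^ 2 ∂μ) * ∫ a, g a ^ 2 ∂μ := by
  have two : ENNReal.ofReal 2 = 2 := by norm_num
  have holder := integral_mul_le_Lp_mul_Lq_of_nonneg HolderConjugate.two_two hf hg
    (two ▸ hf₂) (two ▸ hg₂)
  have hF : 0 ≤ ∫ a, f a ^ 2 ∂μ := integral_nonneg fun _ => sq_nonneg _
  have hG : 0 ≤ ∫ a, g a ^ 2 ∂μ := integral_nonneg fun _ => sq_nonneg _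
  simp only [rpow_two] at holder
  rw [← mul_rpow hF hG, ← sqrt_eq_rpow] at holder
  have hfg : 0 ≤ ∫ a, f a * g a ∂μ :=
    integral_nonneg_of_ae (by filter_upwards [hf, hg] with a ha hb using mul_nonneg ha hb)
  exact (le_sqrt hfg (mul_nonneg hF hG)).1 holder

theorem setIntegral_Ioi_comp_add_right {E : Type*} [NormedAddCommGroup E] [NormedSpace ℝ E]
    (f : ℝ → E) (a c : ℝ) : ∫ s in Ioi a, f (s + c) = ∫ t in Ioi (a + c), f t := by
  simpa [preimage_add_const_Ioi] using
    (measurePreserving_add_right volume c).setIntegral_preimage_emb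
      (Homeomorph.addRight c).measurableEmbedding f (Ioi (a + c))

theorem integrable_exp_neg_sq : Integrable fun t : ℝ => exp (-t ^ 2) := by
  simpa using integrable_exp_neg_mul_sq one_pos

theorem memLp_two_exp_neg_add_sq_div_two (c : ℝ) :
    MemLp (fun s : ℝ => exp (-(s + c) ^ 2 / 2)) 2 volume := by
  refine (memLp_two_iff_integrable_sq (by fun_prop)).2 ?_
  refine (integrable_exp_neg_sq.comp_add_right c).congr (ae_of_all _ fun s => ?_)
  simp only [← exp_nat_mul]
  ring_nf

theorem integral_Ioi_exp_neg_sq_zero : ∫ t in Ioi (0 : ℝ), exp (-t ^ 2) = √π / 2 := by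
  simpa using integral_gaussian_Ioi 1

theorem sqrt_pi_div_two_mul_erf (y : ℝ) :
    √π / 2 * erf y = ∫ t in (0 : ℝ)..y, exp (-t ^ 2) := by
  have : √π ≠ 0 := (sqrt_pos.2 pi_pos).ne'
  rw [erf]
  field_simp

theorem integral_Iic_exp_neg_sq (y : ℝ) :
    ∫ t in Iic y, exp (-t ^ 2) = √π / 2 * (1 + erf y) := by
  have hzero : ∫ t in Iic (0 : ℝ), exp (-t ^ 2) = √π / 2 := by
    have h := integral_comp_neg_Iic 0 fun t => exp (-t ^ 2)
    simp only [neg_sq, neg_zero] at h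
    rw [h, integral_Ioi_exp_neg_sq_zero]
  have := intervalIntegral.integral_Iic_sub_Iic (a := 0) (b := y)
    integrable_exp_neg_sq.integrableOn integrable_exp_neg_sq.integrableOn
  rw [hzero, ← sqrt_pi_div_two_mul_erf] at this
  linarith

theorem integral_Ioi_exp_neg_sq (y : ℝ) :
    ∫ t in Ioi y, exp (-t ^ 2) = √π / 2 * (1 - erf y) := by
  have := intervalIntegral.integral_Iic_add_Ioi (b := y) integrable_exp_neg_sq.integrableOn
    integrable_exp_neg_sq.integrableOn
  rw [integral_Iic_exp_neg_sq, (by simpa using integral_gaussian 1 : ∫ t, exp (-t ^ 2) = √π)]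
    at this
  linarith

theorem sq_exp_neg_sq_mul_le_integral_Ioi_mul_integral_Iic (y : ℝ) :
    (exp (-y ^ 2) * (√π / 2)) ^ 2 ≤
      (∫ t in Ioi y, exp (-t ^ 2)) * ∫ t in Iic y, exp (-t ^ 2) := by
  have hprod : ∀ s : ℝ, exp (-(s + y) ^ 2 / 2) * exp (-(s + -y) ^ 2 / 2)
      = exp (-y ^ 2) * exp (-s ^ 2) := fun s => by
    rw [← exp_add, ← exp_add]; ring_nf
  have hsq : ∀ c s : ℝ, exp (-(s + c) ^ 2 / 2) ^ 2 = exp (-(s + c) ^ 2) := fun c s => by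
    rw [← exp_nat_mul]; ring_nf
  have hreflect : ∫ t in Ioi (-y), exp (-t ^ 2) = ∫ t in Iic y, exp (-t ^ 2) := by
    have h := integral_comp_neg_Ioi (-y) fun t => exp (-t ^ 2)
    simp only [neg_sq, neg_neg] at h
    exact h
  have cs := sq_integral_mul_le_integral_sq_mul_integral_sq (μ := volume.restrict (Ioi 0))
    (ae_of_all _ fun s => (exp_pos (-(s + y) ^ 2 / 2)).le)
    (ae_of_all _ fun s => (exp_pos (-(s + -y) ^ 2 / 2)).le)
    ((memLp_two_exp_neg_add_sq_div_two y).restrict _)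
    ((memLp_two_exp_neg_add_sq_div_two (-y)).restrict _)
  simp only [hprod, hsq, integral_const_mul, integral_Ioi_exp_neg_sq_zero] at cs
  rwa [setIntegral_Ioi_comp_add_right (fun t => exp (-t ^ 2)),
    setIntegral_Ioi_comp_add_right (fun t => exp (-t ^ 2)), zero_add, zero_add, hreflect] at cs

theorem sq_exp_neg_sq_le_one_sub_sq_erf (y : ℝ) : exp (-y ^ 2) ^ 2 ≤ 1 - erf y ^ 2 := by
  have h := sq_exp_neg_sq_mul_le_integral_Ioi_mul_integral_Iic y
  rw [integral_Ioi_exp_neg_sq, integral_Iic_exp_neg_sq] at h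
  exact le_of_mul_le_mul_left (by linear_combination h) (by positivity : 0 < (√π / 2) ^ 2)

theorem stmt_6 (M : ℝ) (y : ℝ) (hy : erf y = M) :
    (1 / Real.sqrt (2 * Real.pi * (1 - M ^ 2))) * Real.exp (-(y ^ 2)) ≤
      1 / Real.sqrt (2 * Real.pi) := by
  have hroot : exp (-(y ^ 2)) ≤ √(1 - M ^ 2) :=
    le_sqrt_of_sq_le (hy ▸ sq_exp_neg_sq_le_one_sub_sq_erf y)
  have hpos : 0 < √(1 - M ^ 2) := (exp_pos _).trans_le hroot
  calc _ = 1 / √(2 * π) * (exp (-(y ^ 2)) / √(1 - M ^ 2)) := by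
        rw [sqrt_mul (by positivity)]; ring
    _ ≤ 1 / √(2 * π) := mul_le_of_le_one_right (by positivity) ((div_le_one hpos).2 hroot)
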